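/- (RPO surrogate lower bound, Theorem 2) Let Δ^{P',P}(π) = J(P',π) - J(P,π), and define the surrogate L_{π'}(π) = Σ_{t=0}^∞ γ^t E_{s_t∼(P',π')} Σ_{a_t} π(a_t|s_t) Σ_{s_{t+1}} P'(s_{t+1}|s_t,a_t)[ r(s_t,a_t,s_{t+1}) + γ V^{P,π'}(s_{t+1}) - Q^{P,π'}(s_t,a_t) ]. Then Δ^{P',P}(π) ≥ L_{π'}(π) - C₁ where C₁ = (4γ r_max δ₁/(1-γ)²) · min( δ₂(γ²+2)/(1-γ), 1 + δ₂/(1-γ) ), with δ₁ the max one-step TV distance between P' and P and δ₂ the max TV distance between π and π'. -/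

import Mathlib

open scoped BigOperators

variable {S A : Type*}

/-- `P` is a transition kernel: for each state-action pair, a probability
distribution over next states. -/
def IsKernel [Fintype S] (P : S → A → S → ℝ) : Prop :=
  ∀ s a, (∀ s', 0 ≤ P s a s') ∧ ∑ s', P s a s' = 1

/-- `π` is a stochastic policy: for each state, a probability distribution over actions. -/
def IsPolicy [Fintype A] (π : S → A → ℝ) : Prop :=
  ∀ s, (∀ a, 0 ≤ π s a) ∧ ∑ a, π s a = 1

/-- `ρ` is a probability distribution over states. -/
def IsDist [Fintype S] (ρ : S → ℝ) : Prop :=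
  (∀ s, 0 ≤ ρ s) ∧ ∑ s, ρ s = 1

/-- One step of the state-marginal evolution under kernel `P` and policy `π`. -/
noncomputable def stepMarginal [Fintype S] [Fintype A]
    (P : S → A → S → ℝ) (π : S → A → ℝ) (μ : S → ℝ) : S → ℝ :=
  fun s' => ∑ s, μ s * ∑ a, π s a * P s a s'

/-- The time-`t` state marginal under kernel `P`, policy `π`, initial distribution `ρ`. -/
noncomputable def marginal [Fintype S] [Fintype A]
    (P : S → A → S → ℝ) (π : S → A → ℝ) (ρ : S → ℝ) : ℕ → S → ℝ
  | 0 => ρ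
  | t + 1 => stepMarginal P π (marginal P π ρ t)

/-- Expected one-step reward when the current state is distributed according to `μ`. -/
noncomputable def expReward [Fintype S] [Fintype A]
    (P : S → A → S → ℝ) (π : S → A → ℝ) (r : S → A → S → ℝ) (μ : S → ℝ) : ℝ :=
  ∑ s, μ s * ∑ a, π s a * ∑ s', P s a s' * r s a s'

/-- The expected discounted return `J(P, π)` with initial distribution `ρ`. -/
noncomputable def Jret [Fintype S] [Fintype A]
    (P : S → A → S → ℝ) (π : S → A → ℝ) (r : S → A → S → ℝ) (γ : ℝ) (ρ : S → ℝ) : ℝ :=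
  ∑' t : ℕ, γ ^ t * expReward P π r (marginal P π ρ t)

/-- The value function `V^{P,π}(s)`: the return starting from state `s`. -/
noncomputable def Vval [Fintype S] [Fintype A] [DecidableEq S]
    (P : S → A → S → ℝ) (π : S → A → ℝ) (r : S → A → S → ℝ) (γ : ℝ) (s : S) : ℝ :=
  Jret P π r γ (fun s' => if s' = s then 1 else 0)

/-- The state-action value function `Q^{P,π}(s,a)`. -/
noncomputable def Qval [Fintype S] [Fintype A] [DecidableEq S]
    (P : S → A → S → ℝ) (π : S → A → ℝ) (r : S → A → S → ℝ) (γ : ℝ) (s : S) (a : A) : ℝ :=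
  ∑ s', P s a s' * (r s a s' + γ * Vval P π r γ s')

/-- The advantage function `A^{P,π}(s,a) = Q^{P,π}(s,a) - V^{P,π}(s)`. -/
noncomputable def Aval [Fintype S] [Fintype A] [DecidableEq S]
    (P : S → A → S → ℝ) (π : S → A → ℝ) (r : S → A → S → ℝ) (γ : ℝ) (s : S) (a : A) : ℝ :=
  Qval P π r γ s a - Vval P π r γ s


/-!
Fix `V = V^{P,π'}` and write `B_{K,π} V (s) = ∑ₐ π(a|s) ∑ₛ' K(s'|s,a) (r + γ V(s'))`.
Telescoping along the chain of `(K, π)` gives `J(K,π) - ⟨ρ, V⟩ = ∑ₜ γᵗ ⟨d_t^{K,π}, B_{K,π} V - V⟩`,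
hence
`J(P',π) - J(P,π) = ∑ₜ γᵗ ⟨d_t^{P',π}, B_{P',π} V - B_{P,π} V⟩
  + ∑ₜ γᵗ ⟨d_t^{P',π} - d_t^{P,π}, B_{P,π} V - V⟩`,
while the surrogate `L` is the first sum with `d_t^{P',π'}` in place of `d_t^{P',π}`.
So `Δ - L` pairs differences of state marginals with two functions: `B_{P',π} V - B_{P,π} V`,
of size at most `2 δ₁ r_max / (1 - γ)`, and `B_{P,π} V - V = B_{P,π} V - B_{P,π'} V`
(Bellman equation), of size at most `2 δ₂ r_max / (1 - γ)`. Writing the marginals as `ρ Tᵗ`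
for the state transition matrix `T`, one step moves them apart in `ℓ¹` by at most `2 δ₂`
(changing the policy) or `2 δ₁` (changing the kernel), so after `t` steps by at most `2 δ t`;
the first pair is also at most `2` apart and equal at `t = 0`. The sums
`∑ t γᵗ = γ / (1 - γ)²` and `∑_{t ≥ 1} γᵗ = γ / (1 - γ)` give the two branches of `C₁`.
-/

open Matrix Finset

section Distribution

variable {ι κ : Type*} [Fintype ι] [Fintype κ]

lemma IsDist.nonempty {μ : ι → ℝ} (hμ : IsDist μ) : Nonempty ι := by
  by_contra h
  rw [not_nonempty_iff] at h
  simpa using hμ.2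

lemma IsDist.sum_abs {μ : ι → ℝ} (hμ : IsDist μ) : ∑ i, |μ i| = 1 := by
  rw [← hμ.2]
  exact sum_congr rfl fun i _ => abs_of_nonneg (hμ.1 i)

lemma IsDist.sum_abs_sub_le_two {μ ν : ι → ℝ} (hμ : IsDist μ) (hν : IsDist ν) :
    ∑ i, |μ i - ν i| ≤ 2 :=
  calc ∑ i, |μ i - ν i| ≤ ∑ i, (|μ i| + |ν i|) := sum_le_sum fun i _ => abs_sub _ _
    _ = 2 := by rw [sum_add_distrib, hμ.sum_abs, hν.sum_abs]; norm_num

lemma abs_dotProduct_le_sum_abs_mul {μ f : ι → ℝ} {C : ℝ} (hf : ∀ i, |f i| ≤ C) :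
    |μ ⬝ᵥ f| ≤ (∑ i, |μ i|) * C :=
  calc |μ ⬝ᵥ f| ≤ ∑ i, |μ i * f i| := abs_sum_le_sum_abs _ _
    _ = ∑ i, |μ i| * |f i| := by simp only [abs_mul]
    _ ≤ ∑ i, |μ i| * C := by gcongr with i; exact hf i
    _ = (∑ i, |μ i|) * C := (sum_mul ..).symm

lemma IsDist.abs_dotProduct_le {μ f : ι → ℝ} {C : ℝ} (hμ : IsDist μ) (hf : ∀ i, |f i| ≤ C) :
    |μ ⬝ᵥ f| ≤ C := by
  simpa [hμ.sum_abs] using abs_dotProduct_le_sum_abs_mul (μ := μ) hf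

lemma sum_abs_vecMul_le (μ : ι → ℝ) (M : Matrix ι κ ℝ) :
    ∑ j, |(μ ᵥ* M) j| ≤ ∑ i, |μ i| * ∑ j, |M i j| :=
  calc ∑ j, |(μ ᵥ* M) j| ≤ ∑ j, ∑ i, |μ i| * |M i j| := by
        gcongr with j
        exact (abs_sum_le_sum_abs _ _).trans_eq (by simp only [abs_mul])
    _ = ∑ i, |μ i| * ∑ j, |M i j| := by rw [sum_comm]; simp only [mul_sum]

lemma IsDist.vecMul {μ : ι → ℝ} {M : Matrix ι κ ℝ} (hμ : IsDist μ) (hM : ∀ i, IsDist (M i)) :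
    IsDist (μ ᵥ* M) := by
  refine ⟨fun j => sum_nonneg fun i _ => mul_nonneg (hμ.1 i) ((hM i).1 j), ?_⟩
  have hM1 : M *ᵥ 1 = 1 := funext fun i => by simpa [mulVec, dotProduct_one] using (hM i).2
  simpa [← dotProduct_one, ← dotProduct_mulVec, hM1] using hμ.2

lemma mem_rowStochastic_iff_isDist [DecidableEq ι] {M : Matrix ι ι ℝ} :
    M ∈ rowStochastic ℝ ι ↔ ∀ i, IsDist (M i) := by
  rw [mem_rowStochastic_iff_sum]
  exact ⟨fun h i => ⟨h.1 i, h.2 i⟩, fun h => ⟨fun i => (h i).1, fun i => (h i).2⟩⟩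

lemma sum_abs_vecMul_sub_vecMul_le {μ ν : ι → ℝ} {M N : Matrix ι κ ℝ} {c : ℝ}
    (hM : ∀ i, IsDist (M i)) (hν : IsDist ν) (hMN : ∀ i, ∑ j, |M i j - N i j| ≤ c) :
    ∑ j, |(μ ᵥ* M) j - (ν ᵥ* N) j| ≤ ∑ i, |μ i - ν i| + c := by
  have hsplit : μ ᵥ* M - ν ᵥ* N = (μ - ν) ᵥ* M + ν ᵥ* (M - N) := by
    rw [sub_vecMul, vecMul_sub]; abel
  calc ∑ j, |(μ ᵥ* M) j - (ν ᵥ* N) j|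
      ≤ ∑ j, (|((μ - ν) ᵥ* M) j| + |(ν ᵥ* (M - N)) j|) := by
        gcongr with j
        rw [← Pi.sub_apply (μ ᵥ* M), hsplit]
        exact abs_add_le _ _
    _ ≤ ∑ i, |μ i - ν i| * ∑ j, |M i j| + ∑ i, |ν i| * ∑ j, |M i j - N i j| := by
        rw [sum_add_distrib]
        exact add_le_add (sum_abs_vecMul_le _ _) (sum_abs_vecMul_le _ _)
    _ ≤ ∑ i, |μ i - ν i| + ∑ i, |ν i| * c := by
        simp only [(hM _).sum_abs, mul_one]
        gcongr with i; exact hMN i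
    _ = ∑ i, |μ i - ν i| + c := by rw [← sum_mul, hν.sum_abs, one_mul]

lemma sum_abs_vecMul_pow_sub_le [DecidableEq ι] {ρ : ι → ℝ} {M N : Matrix ι ι ℝ} {c : ℝ}
    (hρ : IsDist ρ) (hM : M ∈ rowStochastic ℝ ι) (hN : N ∈ rowStochastic ℝ ι)
    (hMN : ∀ i, ∑ j, |M i j - N i j| ≤ c) (t : ℕ) :
    ∑ j, |(ρ ᵥ* M ^ t) j - (ρ ᵥ* N ^ t) j| ≤ t * c := by
  induction t with
  | zero => simp
  | succ t ih =>
    have hρN : IsDist (ρ ᵥ* N ^ t) :=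
      hρ.vecMul (mem_rowStochastic_iff_isDist.1 (Submonoid.pow_mem _ hN t))
    rw [pow_succ, pow_succ, ← vecMul_vecMul, ← vecMul_vecMul]
    calc _ ≤ ∑ j, |(ρ ᵥ* M ^ t) j - (ρ ᵥ* N ^ t) j| + c :=
          sum_abs_vecMul_sub_vecMul_le (mem_rowStochastic_iff_isDist.1 hM) hρN hMN
      _ ≤ t * c + c := by gcongr
      _ = (t + 1 : ℕ) * c := by push_cast; ring

end Distribution

section Discounted

variable {γ C : ℝ} {u : ℕ → ℝ}

lemma summable_geometric_mul_of_abs_le (hγ0 : 0 ≤ γ) (hγ1 : γ < 1) (hu : ∀ t, |u t| ≤ C) :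
    Summable fun t => γ ^ t * u t := by
  refine Summable.of_norm_bounded ((summable_geometric_of_lt_one hγ0 hγ1).mul_right C) fun t => ?_
  rw [Real.norm_eq_abs, abs_mul, abs_of_nonneg (pow_nonneg hγ0 t)]
  exact mul_le_mul_of_nonneg_left (hu t) (pow_nonneg hγ0 t)

lemma abs_tsum_geometric_mul_le_of_hasSum {b : ℕ → ℝ} {B : ℝ} (hγ0 : 0 ≤ γ)
    (hb : HasSum (fun t => γ ^ t * b t) B) (hu : ∀ t, |u t| ≤ b t) :
    |∑' t, γ ^ t * u t| ≤ B := by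
  rw [← Real.norm_eq_abs]
  refine tsum_of_norm_bounded hb fun t => ?_
  rw [Real.norm_eq_abs, abs_mul, abs_of_nonneg (pow_nonneg hγ0 t)]
  exact mul_le_mul_of_nonneg_left (hu t) (pow_nonneg hγ0 t)

lemma abs_tsum_geometric_mul_le (hγ0 : 0 ≤ γ) (hγ1 : γ < 1) (hu : ∀ t, |u t| ≤ C) :
    |∑' t, γ ^ t * u t| ≤ C / (1 - γ) := by
  refine abs_tsum_geometric_mul_le_of_hasSum hγ0 ?_ hu
  simpa [div_eq_inv_mul] using (hasSum_geometric_of_lt_one hγ0 hγ1).mul_right C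

lemma abs_tsum_geometric_mul_le_of_abs_le_mul (hγ0 : 0 ≤ γ) (hγ1 : γ < 1)
    (hu : ∀ t, |u t| ≤ t * C) : |∑' t, γ ^ t * u t| ≤ γ * C / (1 - γ) ^ 2 := by
  have hγ : ‖γ‖ < 1 := by rwa [Real.norm_eq_abs, abs_of_nonneg hγ0]
  have hb : HasSum (fun t : ℕ => γ ^ t * (t * C)) (γ * C / (1 - γ) ^ 2) := by
    rw [mul_div_right_comm]
    exact ((hasSum_coe_mul_geometric_of_norm_lt_one hγ).mul_right C).congr_fun fun t => by ring
  exact abs_tsum_geometric_mul_le_of_hasSum hγ0 hb hu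

lemma tsum_geometric_mul_eq_add (hu : Summable fun t => γ ^ t * u t) :
    ∑' t, γ ^ t * u t = u 0 + γ * ∑' t, γ ^ t * u (t + 1) := by
  rw [hu.tsum_eq_zero_add, ← tsum_mul_left]
  simp only [pow_zero, one_mul, pow_succ]
  congr 1
  exact tsum_congr fun t => by ring

lemma abs_tsum_geometric_mul_le_of_eq_zero (hγ0 : 0 ≤ γ) (hγ1 : γ < 1) (h0 : u 0 = 0)
    (hu : ∀ t, |u t| ≤ C) : |∑' t, γ ^ t * u t| ≤ γ * C / (1 - γ) := by
  rw [tsum_geometric_mul_eq_add (summable_geometric_mul_of_abs_le hγ0 hγ1 hu), h0, zero_add,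
    abs_mul, abs_of_nonneg hγ0, mul_div_assoc]
  exact mul_le_mul_of_nonneg_left (abs_tsum_geometric_mul_le hγ0 hγ1 fun t => hu (t + 1)) hγ0

lemma tsum_geometric_mul_telescope {a v : ℕ → ℝ} (ha : Summable fun t => γ ^ t * a t)
    (hv : Summable fun t => γ ^ t * v t) :
    ∑' t, γ ^ t * (a t + γ * v (t + 1) - v t) = ∑' t, γ ^ t * a t - v 0 := by
  have hv' : Summable fun t => γ ^ t * (γ * v (t + 1)) := by
    refine ((summable_nat_add_iff 1).mpr hv).congr fun t => ?_
    ring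
  calc ∑' t, γ ^ t * (a t + γ * v (t + 1) - v t)
      = ∑' t, γ ^ t * a t + ∑' t, γ ^ t * (γ * v (t + 1)) - ∑' t, γ ^ t * v t := by
        rw [← ha.tsum_add hv', ← (ha.add hv').tsum_sub hv]
        exact tsum_congr fun t => by ring
    _ = _ := by
        rw [tsum_geometric_mul_eq_add hv]
        simp only [mul_left_comm _ γ, tsum_mul_left]
        ring

end Discounted

section DiscountedOccupancy

variable {ι : Type*} [Fintype ι] {γ c C : ℝ} {μ ν : ℕ → ι → ℝ}

lemma summable_geometric_mul_dotProduct (hγ0 : 0 ≤ γ) (hγ1 : γ < 1) (hμ : ∀ t, IsDist (μ t))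
    (f : ι → ℝ) : Summable fun t => γ ^ t * (μ t ⬝ᵥ f) :=
  summable_geometric_mul_of_abs_le hγ0 hγ1 fun t => (hμ t).abs_dotProduct_le fun i =>
    single_le_sum (f := fun j => |f j|) (fun _ _ => abs_nonneg _) (mem_univ i)

lemma tsum_geometric_mul_dotProduct_add (hγ0 : 0 ≤ γ) (hγ1 : γ < 1) (hμ : ∀ t, IsDist (μ t))
    (f g : ι → ℝ) :
    ∑' t, γ ^ t * (μ t ⬝ᵥ (f + g)) = ∑' t, γ ^ t * (μ t ⬝ᵥ f) + ∑' t, γ ^ t * (μ t ⬝ᵥ g) := by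
  rw [← (summable_geometric_mul_dotProduct hγ0 hγ1 hμ f).tsum_add
    (summable_geometric_mul_dotProduct hγ0 hγ1 hμ g)]
  exact tsum_congr fun t => by rw [dotProduct_add, mul_add]

lemma tsum_geometric_mul_dotProduct_sub (hγ0 : 0 ≤ γ) (hγ1 : γ < 1) (hμ : ∀ t, IsDist (μ t))
    (hν : ∀ t, IsDist (ν t)) (f : ι → ℝ) :
    ∑' t, γ ^ t * (μ t ⬝ᵥ f) - ∑' t, γ ^ t * (ν t ⬝ᵥ f) =
      ∑' t, γ ^ t * ((μ t - ν t) ⬝ᵥ f) := by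
  rw [← (summable_geometric_mul_dotProduct hγ0 hγ1 hμ f).tsum_sub
    (summable_geometric_mul_dotProduct hγ0 hγ1 hν f)]
  exact tsum_congr fun t => by rw [sub_dotProduct, mul_sub]

lemma abs_tsum_geometric_mul_dotProduct_le {f : ι → ℝ} (hγ0 : 0 ≤ γ) (hγ1 : γ < 1) (hC : 0 ≤ C)
    (hf : ∀ i, |f i| ≤ C) (hμ : ∀ t, ∑ i, |μ t i| ≤ t * c) :
    |∑' t, γ ^ t * (μ t ⬝ᵥ f)| ≤ γ * (c * C) / (1 - γ) ^ 2 :=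
  abs_tsum_geometric_mul_le_of_abs_le_mul hγ0 hγ1 fun t =>
    (abs_dotProduct_le_sum_abs_mul hf).trans <| by
      rw [← mul_assoc]; exact mul_le_mul_of_nonneg_right (hμ t) hC

lemma abs_tsum_geometric_mul_dotProduct_sub_le {f : ι → ℝ} (hγ0 : 0 ≤ γ) (hγ1 : γ < 1)
    (hC : 0 ≤ C) (hf : ∀ i, |f i| ≤ C) (hμ : ∀ t, IsDist (μ t)) (hν : ∀ t, IsDist (ν t)) (h0 : μ 0 = ν 0) :
    |∑' t, γ ^ t * ((μ t - ν t) ⬝ᵥ f)| ≤ γ * (2 * C) / (1 - γ) :=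
  abs_tsum_geometric_mul_le_of_eq_zero hγ0 hγ1 (by rw [h0, sub_self, zero_dotProduct]) fun t =>
    (abs_dotProduct_le_sum_abs_mul hf).trans <|
      mul_le_mul_of_nonneg_right ((hμ t).sum_abs_sub_le_two (hν t)) hC

end DiscountedOccupancy

lemma IsPolicy.isDist [Fintype A] {π : S → A → ℝ} (hπ : IsPolicy π) (s : S) : IsDist (π s) :=
  hπ s

lemma IsKernel.isDist [Fintype S] {K : S → A → S → ℝ} (hK : IsKernel K) (s : S) (a : A) :
    IsDist (K s a) :=
  hK s a

section MarkovChain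

variable [Fintype S] [Fintype A] {K K' : S → A → S → ℝ} {π π' : S → A → ℝ} {ρ : S → ℝ}

def transitionMatrix (K : S → A → S → ℝ) (π : S → A → ℝ) : Matrix S S ℝ :=
  fun s => π s ᵥ* K s

lemma IsKernel.isDist_transitionMatrix (hK : IsKernel K) (hπ : IsPolicy π) (s : S) :
    IsDist (transitionMatrix K π s) :=
  (hπ.isDist s).vecMul (hK.isDist s)

lemma transitionMatrix_mem_rowStochastic [DecidableEq S] (hK : IsKernel K) (hπ : IsPolicy π) :
    transitionMatrix K π ∈ rowStochastic ℝ S :=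
  mem_rowStochastic_iff_isDist.2 (hK.isDist_transitionMatrix hπ)

lemma isDist_transitionMatrix_pow [DecidableEq S] (hK : IsKernel K) (hπ : IsPolicy π)
    (t : ℕ) (s : S) : IsDist ((transitionMatrix K π ^ t) s) :=
  mem_rowStochastic_iff_isDist.1
    (Submonoid.pow_mem _ (transitionMatrix_mem_rowStochastic hK hπ) t) s

lemma marginal_succ (K : S → A → S → ℝ) (π : S → A → ℝ) (ρ : S → ℝ) (t : ℕ) :
    marginal K π ρ (t + 1) = marginal K π ρ t ᵥ* transitionMatrix K π :=
  rfl

lemma marginal_eq_vecMul_pow [DecidableEq S] (K : S → A → S → ℝ) (π : S → A → ℝ) (ρ : S → ℝ)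
    (t : ℕ) : marginal K π ρ t = ρ ᵥ* transitionMatrix K π ^ t := by
  induction t with
  | zero => simp [marginal]
  | succ t ih => rw [marginal_succ, ih, vecMul_vecMul, pow_succ]

lemma isDist_marginal (hK : IsKernel K) (hπ : IsPolicy π) (hρ : IsDist ρ) (t : ℕ) :
    IsDist (marginal K π ρ t) := by
  induction t with
  | zero => exact hρ
  | succ t ih => exact ih.vecMul (hK.isDist_transitionMatrix hπ)

lemma sum_abs_transitionMatrix_sub_of_policy (hK : IsKernel K) (s : S) :
    ∑ s', |transitionMatrix K π s s' - transitionMatrix K π' s s'| ≤ ∑ a, |π s a - π' s a| := by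
  have h : ∀ s', transitionMatrix K π s s' - transitionMatrix K π' s s' =
      ((π s - π' s) ᵥ* K s) s' := by
    intro s'; simp [transitionMatrix, vecMul, dotProduct, sub_mul]
  simp only [h]
  refine (sum_abs_vecMul_le _ _).trans_eq ?_
  simp [(hK.isDist s _).sum_abs]

lemma sum_abs_transitionMatrix_sub_of_kernel {c : ℝ} (hπ : IsPolicy π)
    (hc : ∀ s a, ∑ s', |K' s a s' - K s a s'| ≤ c) (s : S) :
    ∑ s', |transitionMatrix K' π s s' - transitionMatrix K π s s'| ≤ c := by
  have h : ∀ s', transitionMatrix K' π s s' - transitionMatrix K π s s' =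
      (π s ᵥ* (K' s - K s)) s' := by
    intro s'; simp [transitionMatrix, vecMul, dotProduct, mul_sub]
  simp only [h]
  calc _ ≤ ∑ a, |π s a| * ∑ s', |K' s a s' - K s a s'| := sum_abs_vecMul_le _ _
    _ ≤ ∑ a, |π s a| * c := by gcongr with a; exact hc s a
    _ = c := by rw [← sum_mul, (hπ.isDist s).sum_abs, one_mul]

lemma sum_abs_marginal_sub_of_policy [DecidableEq S] {c : ℝ} (hK : IsKernel K)
    (hπ : IsPolicy π) (hπ' : IsPolicy π') (hρ : IsDist ρ)
    (hc : ∀ s, ∑ a, |π s a - π' s a| ≤ c) (t : ℕ) :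
    ∑ s, |marginal K π ρ t s - marginal K π' ρ t s| ≤ t * c := by
  simp only [marginal_eq_vecMul_pow]
  exact sum_abs_vecMul_pow_sub_le hρ (transitionMatrix_mem_rowStochastic hK hπ)
    (transitionMatrix_mem_rowStochastic hK hπ')
    (fun s => (sum_abs_transitionMatrix_sub_of_policy hK s).trans (hc s)) t

lemma sum_abs_marginal_sub_of_kernel [DecidableEq S] {c : ℝ} (hK : IsKernel K)
    (hK' : IsKernel K') (hπ : IsPolicy π) (hρ : IsDist ρ)
    (hc : ∀ s a, ∑ s', |K' s a s' - K s a s'| ≤ c) (t : ℕ) :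
    ∑ s, |marginal K' π ρ t s - marginal K π ρ t s| ≤ t * c := by
  simp only [marginal_eq_vecMul_pow]
  exact sum_abs_vecMul_pow_sub_le hρ (transitionMatrix_mem_rowStochastic hK' hπ)
    (transitionMatrix_mem_rowStochastic hK hπ) (sum_abs_transitionMatrix_sub_of_kernel hπ hc) t

end MarkovChain

section Values

variable [Fintype S] [Fintype A] {K : S → A → S → ℝ} {π : S → A → ℝ} {r : S → A → S → ℝ}
  {γ rmax : ℝ}

def rewardVec (K : S → A → S → ℝ) (π : S → A → ℝ) (r : S → A → S → ℝ) : S → ℝ :=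
  fun s => ∑ a, π s a * ∑ s', K s a s' * r s a s'

def bellman (K : S → A → S → ℝ) (π : S → A → ℝ) (r : S → A → S → ℝ) (γ : ℝ) (V : S → ℝ) :
    S → ℝ :=
  fun s => ∑ a, π s a * ∑ s', K s a s' * (r s a s' + γ * V s')

lemma expReward_eq_dotProduct (μ : S → ℝ) : expReward K π r μ = μ ⬝ᵥ rewardVec K π r :=
  rfl

lemma bellman_eq_add (V : S → ℝ) :
    bellman K π r γ V = rewardVec K π r + γ • (transitionMatrix K π *ᵥ V) := by
  funext s
  simp only [bellman, rewardVec, transitionMatrix, Pi.add_apply, Pi.smul_apply, smul_eq_mul,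
    mulVec, vecMul, dotProduct, mul_add, sum_add_distrib, mul_sum, sum_mul]
  congr 1
  rw [sum_comm]
  exact sum_congr rfl fun _ _ => sum_congr rfl fun _ _ => by ring

lemma abs_rewardVec_le (hK : IsKernel K) (hπ : IsPolicy π)
    (hr : ∀ s a s', |r s a s'| ≤ rmax) (s : S) : |rewardVec K π r s| ≤ rmax :=
  (hπ.isDist s).abs_dotProduct_le fun a => (hK.isDist s a).abs_dotProduct_le (hr s a)

variable [DecidableEq S]

lemma Vval_eq_tsum (s : S) :
    Vval K π r γ s = ∑' t, γ ^ t * (transitionMatrix K π ^ t *ᵥ rewardVec K π r) s := by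
  refine tsum_congr fun t => ?_
  rw [expReward_eq_dotProduct, marginal_eq_vecMul_pow, ← dotProduct_mulVec]
  simp [dotProduct]

lemma summable_geometric_mul_pow_mulVec (hK : IsKernel K) (hπ : IsPolicy π) (hγ0 : 0 ≤ γ)
    (hγ1 : γ < 1) (f : S → ℝ) (s : S) :
    Summable fun t => γ ^ t * (transitionMatrix K π ^ t *ᵥ f) s :=
  summable_geometric_mul_dotProduct hγ0 hγ1 (fun t => isDist_transitionMatrix_pow hK hπ t s) f

lemma tsum_geometric_mul_dotProduct_eq_dotProduct_Vval (hK : IsKernel K) (hπ : IsPolicy π)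
    (hγ0 : 0 ≤ γ) (hγ1 : γ < 1) (μ : S → ℝ) :
    ∑' t, γ ^ t * (μ ⬝ᵥ transitionMatrix K π ^ t *ᵥ rewardVec K π r) = μ ⬝ᵥ Vval K π r γ := by
  calc ∑' t, γ ^ t * (μ ⬝ᵥ transitionMatrix K π ^ t *ᵥ rewardVec K π r)
      = ∑' t, ∑ s, μ s * (γ ^ t * (transitionMatrix K π ^ t *ᵥ rewardVec K π r) s) := by
        refine tsum_congr fun t => ?_
        simp only [dotProduct, mul_sum]
        exact sum_congr rfl fun s _ => by ring
    _ = ∑ s, ∑' t, μ s * (γ ^ t * (transitionMatrix K π ^ t *ᵥ rewardVec K π r) s) :=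
        Summable.tsum_finsetSum fun s _ =>
          (summable_geometric_mul_pow_mulVec hK hπ hγ0 hγ1 _ s).mul_left _
    _ = μ ⬝ᵥ Vval K π r γ := by simp only [tsum_mul_left, Vval_eq_tsum, dotProduct]

lemma bellman_Vval (hK : IsKernel K) (hπ : IsPolicy π) (hγ0 : 0 ≤ γ) (hγ1 : γ < 1) :
    bellman K π r γ (Vval K π r γ) = Vval K π r γ := by
  funext s
  rw [bellman_eq_add, Vval_eq_tsum s,
    tsum_geometric_mul_eq_add (summable_geometric_mul_pow_mulVec hK hπ hγ0 hγ1 _ s), pow_zero,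
    one_mulVec, Pi.add_apply, Pi.smul_apply, smul_eq_mul]
  congr 2
  change transitionMatrix K π s ⬝ᵥ _ = _
  rw [← tsum_geometric_mul_dotProduct_eq_dotProduct_Vval hK hπ hγ0 hγ1]
  refine tsum_congr fun t => ?_
  rw [pow_succ', ← mulVec_mulVec]
  rfl

lemma abs_Vval_le (hK : IsKernel K) (hπ : IsPolicy π) (hγ0 : 0 ≤ γ) (hγ1 : γ < 1)
    (hr : ∀ s a s', |r s a s'| ≤ rmax) (s : S) : |Vval K π r γ s| ≤ rmax / (1 - γ) := by
  rw [Vval_eq_tsum]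
  exact abs_tsum_geometric_mul_le hγ0 hγ1 fun t =>
    (isDist_transitionMatrix_pow hK hπ t s).abs_dotProduct_le (abs_rewardVec_le hK hπ hr)

lemma abs_add_mul_Vval_le (hK : IsKernel K) (hπ : IsPolicy π) (hγ0 : 0 ≤ γ) (hγ1 : γ < 1)
    (hr : ∀ s a s', |r s a s'| ≤ rmax) (s : S) (a : A) (s' : S) :
    |r s a s' + γ * Vval K π r γ s'| ≤ rmax / (1 - γ) := by
  have hV := abs_Vval_le hK hπ hγ0 hγ1 hr s'
  calc |r s a s' + γ * Vval K π r γ s'| ≤ rmax + γ * (rmax / (1 - γ)) := by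
        refine (abs_add_le _ _).trans (add_le_add (hr s a s') ?_)
        rw [abs_mul, abs_of_nonneg hγ0]
        exact mul_le_mul_of_nonneg_left hV hγ0
    _ = rmax / (1 - γ) := by field_simp [(by linarith : (1 : ℝ) - γ ≠ 0)]; ring

end Values

section PerformanceDifference

variable [Fintype S] [Fintype A] {K K' : S → A → S → ℝ} {π π' : S → A → ℝ}
  {r : S → A → S → ℝ} {γ : ℝ} {ρ : S → ℝ}

lemma Jret_sub_dotProduct_eq_tsum (hK : IsKernel K) (hπ : IsPolicy π) (hρ : IsDist ρ)
    (hγ0 : 0 ≤ γ) (hγ1 : γ < 1) (V : S → ℝ) :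
    Jret K π r γ ρ - ρ ⬝ᵥ V =
      ∑' t, γ ^ t * (marginal K π ρ t ⬝ᵥ (bellman K π r γ V - V)) := by
  have hμ := isDist_marginal hK hπ hρ
  have hstep : ∀ t, marginal K π ρ t ⬝ᵥ (bellman K π r γ V - V) =
      marginal K π ρ t ⬝ᵥ rewardVec K π r + γ * (marginal K π ρ (t + 1) ⬝ᵥ V) -
        marginal K π ρ t ⬝ᵥ V := by
    intro t
    rw [bellman_eq_add, dotProduct_sub, dotProduct_add, dotProduct_smul, dotProduct_mulVec,
      marginal_succ, smul_eq_mul]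
  simp only [hstep]
  rw [tsum_geometric_mul_telescope (summable_geometric_mul_dotProduct hγ0 hγ1 hμ _)
    (summable_geometric_mul_dotProduct hγ0 hγ1 hμ _)]
  rfl

lemma Jret_sub_Jret_eq_tsum (hK : IsKernel K) (hK' : IsKernel K') (hπ : IsPolicy π)
    (hρ : IsDist ρ) (hγ0 : 0 ≤ γ) (hγ1 : γ < 1) (V : S → ℝ) :
    Jret K' π r γ ρ - Jret K π r γ ρ =
      ∑' t, γ ^ t * (marginal K' π ρ t ⬝ᵥ (bellman K' π r γ V - bellman K π r γ V)) +
        ∑' t, γ ^ t * ((marginal K' π ρ t - marginal K π ρ t) ⬝ᵥ (bellman K π r γ V - V)) := by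
  have hsplit : bellman K' π r γ V - V =
      (bellman K' π r γ V - bellman K π r γ V) + (bellman K π r γ V - V) := by abel
  have hK'V := Jret_sub_dotProduct_eq_tsum (r := r) hK' hπ hρ hγ0 hγ1 V
  have hKV := Jret_sub_dotProduct_eq_tsum (r := r) hK hπ hρ hγ0 hγ1 V
  rw [hsplit, tsum_geometric_mul_dotProduct_add hγ0 hγ1 (isDist_marginal hK' hπ hρ)] at hK'V
  rw [← tsum_geometric_mul_dotProduct_sub hγ0 hγ1 (isDist_marginal hK' hπ hρ)
    (isDist_marginal hK hπ hρ)]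
  linarith

lemma Jret_sub_Jret_sub_tsum_eq_tsum (hK : IsKernel K) (hK' : IsKernel K') (hπ : IsPolicy π)
    (hρ : IsDist ρ) (hγ0 : 0 ≤ γ) (hγ1 : γ < 1) {ν : ℕ → S → ℝ} (hν : ∀ t, IsDist (ν t))
    (V : S → ℝ) :
    Jret K' π r γ ρ - Jret K π r γ ρ -
        ∑' t, γ ^ t * (ν t ⬝ᵥ (bellman K' π r γ V - bellman K π r γ V)) =
      ∑' t, γ ^ t * ((marginal K' π ρ t - ν t) ⬝ᵥ (bellman K' π r γ V - bellman K π r γ V)) +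
        ∑' t, γ ^ t * ((marginal K' π ρ t - marginal K π ρ t) ⬝ᵥ (bellman K π r γ V - V)) := by
  rw [Jret_sub_Jret_eq_tsum hK hK' hπ hρ hγ0 hγ1 V,
    ← tsum_geometric_mul_dotProduct_sub hγ0 hγ1 (isDist_marginal hK' hπ hρ) hν]
  ring

lemma abs_bellman_sub_bellman_of_kernel {V : S → ℝ} {c C : ℝ} (hπ : IsPolicy π)
    (hc : ∀ s a, ∑ s', |K' s a s' - K s a s'| ≤ c) (hC : 0 ≤ C)
    (hw : ∀ s a s', |r s a s' + γ * V s'| ≤ C) (s : S) :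
    |(bellman K' π r γ V - bellman K π r γ V) s| ≤ c * C := by
  have h : (bellman K' π r γ V - bellman K π r γ V) s =
      π s ⬝ᵥ fun a => (K' s a - K s a) ⬝ᵥ fun s' => r s a s' + γ * V s' := by
    simp [bellman, dotProduct, ← sum_sub_distrib, ← mul_sub, sub_mul]
  rw [h]
  refine (hπ.isDist s).abs_dotProduct_le fun a =>
    (abs_dotProduct_le_sum_abs_mul (hw s a)).trans ?_
  exact mul_le_mul_of_nonneg_right (hc s a) hC

lemma abs_bellman_sub_bellman_of_policy {V : S → ℝ} {C : ℝ} (s : S)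
    (hQ : ∀ a, |∑ s', K s a s' * (r s a s' + γ * V s')| ≤ C) :
    |bellman K π r γ V s - bellman K π' r γ V s| ≤ (∑ a, |π s a - π' s a|) * C := by
  have h : bellman K π r γ V s - bellman K π' r γ V s =
      (π s - π' s) ⬝ᵥ fun a => ∑ s', K s a s' * (r s a s' + γ * V s') := by
    simp [bellman, dotProduct, ← sum_sub_distrib, sub_mul]
  rw [h]
  exact abs_dotProduct_le_sum_abs_mul hQ

variable [DecidableEq S]

lemma abs_bellman_Vval_sub_Vval_le {rmax c : ℝ} (hK : IsKernel K) (hπ' : IsPolicy π')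
    (hγ0 : 0 ≤ γ) (hγ1 : γ < 1) (hr : ∀ s a s', |r s a s'| ≤ rmax) (hM : 0 ≤ rmax / (1 - γ))
    (hc : ∀ s, ∑ a, |π s a - π' s a| ≤ c) (s : S) :
    |(bellman K π r γ (Vval K π' r γ) - Vval K π' r γ) s| ≤ c * (rmax / (1 - γ)) := by
  rw [Pi.sub_apply, ← congrFun (bellman_Vval hK hπ' hγ0 hγ1) s]
  refine (abs_bellman_sub_bellman_of_policy s fun a => ?_).trans
    (mul_le_mul_of_nonneg_right (hc s) hM)
  exact (hK.isDist s a).abs_dotProduct_le (abs_add_mul_Vval_le hK hπ' hγ0 hγ1 hr s a)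

lemma surrogate_eq_tsum_dotProduct_bellman_sub (hK' : IsKernel K') (μ : ℕ → S → ℝ) :
    ∑' t, γ ^ t * ∑ s, μ t s * ∑ a, π s a *
        ∑ s', K' s a s' * (r s a s' + γ * Vval K π' r γ s' - Qval K π' r γ s a) =
      ∑' t, γ ^ t * (μ t ⬝ᵥ
        (bellman K' π r γ (Vval K π' r γ) - bellman K π r γ (Vval K π' r γ))) := by
  have h : ∀ s, ∑ a, π s a *
      ∑ s', K' s a s' * (r s a s' + γ * Vval K π' r γ s' - Qval K π' r γ s a) =
        (bellman K' π r γ (Vval K π' r γ) - bellman K π r γ (Vval K π' r γ)) s := fun s => by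
    simp only [mul_sub, sum_sub_distrib, ← sum_mul, (hK'.isDist s _).2, one_mul]
    rfl
  simp only [h]
  rfl

end PerformanceDifference

lemma neg_le_add_of_abs_le_min {γ rmax δ₁ δ₂ x y : ℝ} (hγ0 : 0 ≤ γ) (hγ1 : γ < 1)
    (hrmax : 0 ≤ rmax) (hδ₁ : 0 ≤ δ₁) (hδ₂ : 0 ≤ δ₂)
    (hx : |x| ≤ min (γ * (2 * δ₂ * (2 * δ₁ * (rmax / (1 - γ)))) / (1 - γ) ^ 2)
      (γ * (2 * (2 * δ₁ * (rmax / (1 - γ)))) / (1 - γ)))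
    (hy : |y| ≤ γ * (2 * δ₁ * (2 * δ₂ * (rmax / (1 - γ)))) / (1 - γ) ^ 2) :
    -(4 * γ * rmax * δ₁ / (1 - γ) ^ 2 * min (δ₂ * (γ ^ 2 + 2) / (1 - γ)) (1 + δ₂ / (1 - γ))) ≤
      x + y := by
  have h1γ : 0 < 1 - γ := by linarith
  have ha : γ * (2 * δ₂ * (2 * δ₁ * (rmax / (1 - γ)))) / (1 - γ) ^ 2 =
      4 * γ * rmax * δ₁ / (1 - γ) ^ 2 * (δ₂ / (1 - γ)) := by
    field_simp; ring
  have hb : γ * (2 * (2 * δ₁ * (rmax / (1 - γ)))) / (1 - γ) =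
      4 * γ * rmax * δ₁ / (1 - γ) ^ 2 * 1 := by
    field_simp; ring
  have hc : γ * (2 * δ₁ * (2 * δ₂ * (rmax / (1 - γ)))) / (1 - γ) ^ 2 =
      4 * γ * rmax * δ₁ / (1 - γ) ^ 2 * (δ₂ / (1 - γ)) := by
    field_simp; ring
  have h2u : 2 * (δ₂ / (1 - γ)) ≤ δ₂ * (γ ^ 2 + 2) / (1 - γ) := by
    rw [← sub_nonneg]
    have : δ₂ * (γ ^ 2 + 2) / (1 - γ) - 2 * (δ₂ / (1 - γ)) = δ₂ * γ ^ 2 / (1 - γ) := by ring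
    rw [this]
    positivity
  rw [ha, hb, ← mul_min_of_nonneg _ _ (by positivity)] at hx
  rw [hc] at hy
  set E := 4 * γ * rmax * δ₁ / (1 - γ) ^ 2
  set u := δ₂ / (1 - γ)
  have hmin : min u 1 + u ≤ min (δ₂ * (γ ^ 2 + 2) / (1 - γ)) (1 + u) :=
    le_min (by linarith [min_le_left u 1]) (by linarith [min_le_right u 1])
  linarith [neg_abs_le x, neg_abs_le y, mul_le_mul_of_nonneg_left hmin (by positivity : 0 ≤ E)]

/-- RPO surrogate lower bound, Theorem 2:
`Δ^{P',P}(π) ≥ L_{π'}(π) - C₁`. -/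
theorem rpo_lower_bound [Fintype S] [Fintype A] [DecidableEq S]
    (P P' : S → A → S → ℝ) (π π' : S → A → ℝ) (r : S → A → S → ℝ) (γ : ℝ) (ρ : S → ℝ)
    (rmax δ₁ δ₂ : ℝ)
    (hP : IsKernel P) (hP' : IsKernel P') (hπ : IsPolicy π) (hπ' : IsPolicy π')
    (hρ : IsDist ρ)
    (hγ0 : 0 ≤ γ) (hγ1 : γ < 1)
    (hr : ∀ s a s', |r s a s'| ≤ rmax)
    (hδ₁ : ∀ s a, (1 / 2) * ∑ s', |P' s a s' - P s a s'| ≤ δ₁)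
    (hδ₂ : ∀ s, (1 / 2) * ∑ a, |π s a - π' s a| ≤ δ₂) :
    Jret P' π r γ ρ - Jret P π r γ ρ ≥
      (∑' t : ℕ, γ ^ t * ∑ s, marginal P' π' ρ t s * ∑ a, π s a *
        ∑ s', P' s a s' * (r s a s' + γ * Vval P π' r γ s' - Qval P π' r γ s a)) -
      4 * γ * rmax * δ₁ / (1 - γ) ^ 2 *
        min (δ₂ * (γ ^ 2 + 2) / (1 - γ)) (1 + δ₂ / (1 - γ)) := by
  obtain ⟨s₀⟩ := hρ.nonempty
  obtain ⟨a₀⟩ := (hπ.isDist s₀).nonempty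
  have hrmax : 0 ≤ rmax := (abs_nonneg _).trans (hr s₀ a₀ s₀)
  have hδ₁0 : 0 ≤ δ₁ := (hδ₁ s₀ a₀).trans' (by positivity)
  have hδ₂0 : 0 ≤ δ₂ := (hδ₂ s₀).trans' (by positivity)
  have hP'P : ∀ s a, ∑ s', |P' s a s' - P s a s'| ≤ 2 * δ₁ := fun s a => by linarith [hδ₁ s a]
  have hππ' : ∀ s, ∑ a, |π s a - π' s a| ≤ 2 * δ₂ := fun s => by linarith [hδ₂ s]
  have hM : 0 ≤ rmax / (1 - γ) := div_nonneg hrmax (by linarith)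
  rw [surrogate_eq_tsum_dotProduct_bellman_sub hP']
  set V := Vval P π' r γ
  have hG : ∀ s, |(bellman P' π r γ V - bellman P π r γ V) s| ≤ 2 * δ₁ * (rmax / (1 - γ)) :=
    abs_bellman_sub_bellman_of_kernel hπ hP'P hM (abs_add_mul_Vval_le hP hπ' hγ0 hγ1 hr)
  have hA := abs_bellman_Vval_sub_Vval_le hP hπ' hγ0 hγ1 hr hM hππ'
  have hd := isDist_marginal hP' hπ hρ
  have hd' := isDist_marginal hP' hπ' hρ
  have hdecomp := Jret_sub_Jret_sub_tsum_eq_tsum (r := r) hP hP' hπ hρ hγ0 hγ1 hd' V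
  have hpolicy := le_min
    (abs_tsum_geometric_mul_dotProduct_le (μ := fun t => marginal P' π ρ t - marginal P' π' ρ t)
      hγ0 hγ1 (by positivity) hG (sum_abs_marginal_sub_of_policy hP' hπ hπ' hρ hππ'))
    (abs_tsum_geometric_mul_dotProduct_sub_le hγ0 hγ1 (by positivity) hG hd hd' rfl)
  have hkernel :=
    abs_tsum_geometric_mul_dotProduct_le (μ := fun t => marginal P' π ρ t - marginal P π ρ t)
      hγ0 hγ1 (by positivity) hA (sum_abs_marginal_sub_of_kernel hP hP' hπ hρ hP'P)
  linarith [neg_le_add_of_abs_le_min hγ0 hγ1 hrmax hδ₁0 hδ₂0 hpolicy hkernel]
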